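/- Let $c_1, c_2 > 0$ and $0 < \delta \leq 1/2$. For all positive reals $v, V, \theta, \Theta$ with $|v/V - 1| \leq \delta$ and $|\theta/\Theta - 1| \leq \delta$, there exist constants $c_1(\delta), c_2(\delta) > 0$ such that $c_1(\delta)\big((v-V)^2/V^2 + (\theta - \Theta)^2/\Theta^2\big) \leq \Phi\big(\tfrac{\theta V}{v\Theta}\big) + \gamma\,\Phi\big(\tfrac{v}{V}\big) \leq c_2(\delta)\big((v-V)^2/V^2 + (\theta-\Theta)^2/\Theta^2\big)$ for any fixed $\gamma > 1$, where $\Phi(z) = z - 1 - \ln z$. -/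

import Mathlib

/-!
With `Φ z = z - 1 - log z`, the inequalities `log √z ≤ √z - 1` and `log z⁻¹ ≤ z⁻¹ - 1` give
`(√z - 1)² ≤ Φ z ≤ (z - 1)² / z`, so `Φ z` is comparable to `(z - 1)²` for `z ∈ [1/3, 3]`.
Put `x = v / V` and `y = θ / Θ`, both in `[1/2, 3/2]`. Then `θV/(vΘ) = y / x ∈ [1/3, 3]` and
`(y / x - 1)² = (y - x)² / x²` is comparable to `(y - x)²`, while `(x - 1)² + (y - x)²` is
comparable to `(x - 1)² + (y - 1)²`; since `γ ≥ 1`, the term `γ Φ x` controls `(x - 1)²`.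
-/

open Real Set

lemma sq_sqrt_sub_one_le_sub_one_sub_log {z : ℝ} (hz : 0 < z) :
    (√z - 1) ^ 2 ≤ z - 1 - log z := by
  have hlog : log z = 2 * log √z := by rw [log_sqrt hz.le]; ring
  nlinarith [log_le_sub_one_of_pos (sqrt_pos.mpr hz), sq_sqrt hz.le]

lemma sq_sub_one_div_eight_le_sub_one_sub_log {z : ℝ} (hz : 0 < z) (hz3 : z ≤ 3) :
    (z - 1) ^ 2 / 8 ≤ z - 1 - log z := by
  have hs := sq_sqrt hz.le
  have hs0 := sqrt_nonneg z
  -- `z - 1 = (√z - 1)(√z + 1)` and `(√z + 1)² ≤ (√3 + 1)² < 8`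
  have : (z - 1) ^ 2 ≤ 8 * (√z - 1) ^ 2 := by
    rw [show (z - 1) ^ 2 = (√z - 1) ^ 2 * (√z + 1) ^ 2 by
      linear_combination (z - 1 + (√z ^ 2 - 1)) * -hs, mul_comm 8]
    gcongr
    nlinarith
  linarith [sq_sqrt_sub_one_le_sub_one_sub_log hz]

lemma sub_one_sub_log_le_sq_div {z : ℝ} (hz : 0 < z) :
    z - 1 - log z ≤ (z - 1) ^ 2 / z := by
  have h := log_le_sub_one_of_pos (inv_pos.mpr hz)
  rw [log_inv] at h
  have e : (z - 1) ^ 2 / z = z - 1 - (1 - z⁻¹) := by field_simp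
  linarith

lemma sub_one_sub_log_le_three_mul_sq {z : ℝ} (hz : 1 / 3 ≤ z) :
    z - 1 - log z ≤ 3 * (z - 1) ^ 2 := by
  have hz0 : 0 < z := by linarith
  calc z - 1 - log z ≤ (z - 1) ^ 2 / z := sub_one_sub_log_le_sq_div hz0
    _ ≤ 3 * (z - 1) ^ 2 := by rw [div_le_iff₀ hz0]; nlinarith [sq_nonneg (z - 1)]

lemma mem_Icc_of_abs_sub_one_le {z δ : ℝ} (hz : |z - 1| ≤ δ) (hδ : δ ≤ 1 / 2) :
    z ∈ Icc (1 / 2 : ℝ) (3 / 2) := by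
  obtain ⟨h₁, h₂⟩ := abs_le.mp hz
  constructor <;> linarith

lemma div_mem_Icc_one_third_three {x y : ℝ} (hx : x ∈ Icc (1 / 2 : ℝ) (3 / 2))
    (hy : y ∈ Icc (1 / 2 : ℝ) (3 / 2)) : y / x ∈ Icc (1 / 3 : ℝ) 3 := by
  obtain ⟨hx₁, hx₂⟩ := hx
  obtain ⟨hy₁, hy₂⟩ := hy
  have hx0 : 0 < x := by linarith
  constructor
  · rw [le_div_iff₀ hx0]; linarith
  · rw [div_le_iff₀ hx0]; linarith

lemma sq_div_sub_one_mem_Icc {x : ℝ} (y : ℝ) (hx : x ∈ Icc (1 / 2 : ℝ) (3 / 2)) :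
    (y / x - 1) ^ 2 ∈ Icc (4 / 9 * (y - x) ^ 2) (4 * (y - x) ^ 2) := by
  obtain ⟨hx₁, hx₂⟩ := hx
  have hx0 : 0 < x := by linarith
  rw [show (y / x - 1) ^ 2 = (y - x) ^ 2 / x ^ 2 by field_simp]
  constructor
  · rw [le_div_iff₀ (by positivity)]
    nlinarith [mul_nonneg (sq_nonneg (y - x)) (by nlinarith : (0 : ℝ) ≤ 9 / 4 - x ^ 2)]
  · rw [div_le_iff₀ (by positivity)]
    nlinarith [mul_nonneg (sq_nonneg (y - x)) (by nlinarith : (0 : ℝ) ≤ x ^ 2 - 1 / 4)]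

section EntropyPair

variable {γ x y : ℝ} (hx : x ∈ Icc (1 / 2 : ℝ) (3 / 2)) (hy : y ∈ Icc (1 / 2 : ℝ) (3 / 2))
include hx hy

lemma sum_sq_sub_one_div_36_le_entropy_pair (hγ : 1 ≤ γ) :
    1 / 36 * ((x - 1) ^ 2 + (y - 1) ^ 2) ≤
      (y / x - 1 - log (y / x)) + γ * (x - 1 - log x) := by
  have hx0 : 0 < x := by linarith [hx.1]
  have hw := div_mem_Icc_one_third_three hx hy
  have hW := (sq_div_sub_one_mem_Icc y hx).1
  have hΦw := sq_sub_one_div_eight_le_sub_one_sub_log (by linarith [hw.1]) hw.2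
  have hΦx := sq_sub_one_div_eight_le_sub_one_sub_log hx0 (by linarith [hx.2])
  have hγΦx : x - 1 - log x ≤ γ * (x - 1 - log x) :=
    le_mul_of_one_le_left ((div_nonneg (sq_nonneg _) (by norm_num)).trans hΦx) hγ
  -- `(y - 1)² ≤ 2 (y - x)² + 2 (x - 1)²`
  nlinarith [sq_nonneg (y - 2 * x + 1)]

lemma entropy_pair_le_sum_sq_sub_one (hγ : 0 ≤ γ) :
    (y / x - 1 - log (y / x)) + γ * (x - 1 - log x) ≤
      (24 + 3 * γ) * ((x - 1) ^ 2 + (y - 1) ^ 2) := by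
  have hw := div_mem_Icc_one_third_three hx hy
  have hW := (sq_div_sub_one_mem_Icc y hx).2
  have hΦw := sub_one_sub_log_le_three_mul_sq hw.1
  have hΦx : γ * (x - 1 - log x) ≤ γ * (3 * (x - 1) ^ 2) :=
    mul_le_mul_of_nonneg_left (sub_one_sub_log_le_three_mul_sq (by linarith [hx.1])) hγ
  -- `(y - x)² ≤ 2 (y - 1)² + 2 (x - 1)²`
  nlinarith [sq_nonneg (x + y - 2), mul_nonneg hγ (sq_nonneg (y - 1))]

end EntropyPair

theorem stmt_18_general (γ : ℝ) (hγ : 1 < γ) (δ : ℝ) (hδ' : δ ≤ 1/2)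
    (Φ : ℝ → ℝ) (hΦ : ∀ z : ℝ, Φ z = z - 1 - Real.log z) :
    ∃ c₁ > (0 : ℝ), ∃ c₂ > (0 : ℝ), ∀ v V θ Θ : ℝ,
      0 < v → 0 < V → 0 < θ → 0 < Θ →
      |v / V - 1| ≤ δ → |θ / Θ - 1| ≤ δ →
      c₁ * ((v - V) ^ 2 / V ^ 2 + (θ - Θ) ^ 2 / Θ ^ 2) ≤
          Φ (θ * V / (v * Θ)) + γ * Φ (v / V) ∧
      Φ (θ * V / (v * Θ)) + γ * Φ (v / V) ≤
          c₂ * ((v - V) ^ 2 / V ^ 2 + (θ - Θ) ^ 2 / Θ ^ 2) := by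
  refine ⟨1 / 36, by norm_num, 24 + 3 * γ, by linarith,
    fun v V θ Θ _ hV _ hΘ hvV hθΘ => ?_⟩
  have hx := mem_Icc_of_abs_sub_one_le hvV hδ'
  have hy := mem_Icc_of_abs_sub_one_le hθΘ hδ'
  have hratio : θ * V / (v * Θ) = (θ / Θ) / (v / V) := by field_simp
  have hrel : ∀ {a A : ℝ}, A ≠ 0 → (a - A) ^ 2 / A ^ 2 = (a / A - 1) ^ 2 := by
    intros; field_simp
  rw [hratio, hΦ, hΦ, hrel hV.ne', hrel hΘ.ne']
  exact ⟨sum_sq_sub_one_div_36_le_entropy_pair hx hy hγ.le,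
    entropy_pair_le_sum_sq_sub_one hx hy (by linarith)⟩

/-- Two-variable quadratic equivalence for the relative entropy
`Φ(θV/(vΘ)) + γΦ(v/V)`. -/
theorem stmt_18 (γ : ℝ) (hγ : 1 < γ) (δ : ℝ) (hδ : 0 < δ) (hδ' : δ ≤ 1/2)
    (Φ : ℝ → ℝ) (hΦ : ∀ z : ℝ, Φ z = z - 1 - Real.log z) :
    ∃ c₁ > (0 : ℝ), ∃ c₂ > (0 : ℝ), ∀ v V θ Θ : ℝ,
      0 < v → 0 < V → 0 < θ → 0 < Θ →
      |v / V - 1| ≤ δ → |θ / Θ - 1| ≤ δ →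
      c₁ * ((v - V) ^ 2 / V ^ 2 + (θ - Θ) ^ 2 / Θ ^ 2) ≤
          Φ (θ * V / (v * Θ)) + γ * Φ (v / V) ∧
      Φ (θ * V / (v * Θ)) + γ * Φ (v / V) ≤
          c₂ * ((v - V) ^ 2 / V ^ 2 + (θ - Θ) ^ 2 / Θ ^ 2) :=
  stmt_18_general γ hγ δ hδ' Φ hΦ
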